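/- arXiv:1601.01638 — 3 statements merged into one kernel-verified Lean document; each statement's English description precedes it below -/
import Mathlib

section
/- Let l ∈ (−1/2, 0]. There exists a constant C > 0 depending only on l such that for all x, y > 0 and all t > 0, (√(xy)/(2t)) · |J_{−l−1/2}(xy/(2t))| ≤ C · t^{−1/2}. (This is the O(|t|^{−1/2}) L¹ → L^∞ dispersive estimate for the evolution group e^{−itH_{π/2}}, whose kernel has modulus (√(xy)/(2t))|J_{−l−1/2}(xy/(2t))|.) -/
open MeasureTheory Real Filter Set

/-- The Bessel function of the first kind of order `ν`,
`J_ν(r) = (r/2)^ν ∑_{n=0}^∞ (−r²/4)^n / (n! Γ(ν+n+1))`. -/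
noncomputable def besselJ (ν r : ℝ) : ℝ :=
  (r / 2) ^ ν * ∑' n : ℕ, (-(r ^ 2 / 4)) ^ n / ((n.factorial : ℝ) * Real.Gamma (ν + n + 1))

/-!
Write `J_ν(r) = (r/2)^ν f(r²)` with `f` an entire power series. For `|ν| ≤ 1/2` the function
`u(r) = r^(ν+1/2) f(r²) = 2^ν √r J_ν(r)` solves `u'' + (1 + (1/4 - ν²)/r²) u = 0`, so the energy
`E = u'² + (1 + (1/4 - ν²)/r²) u²` satisfies `E' = -2 (1/4 - ν²) u² / r³ ≤ 0`. Hence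
`u(r)² ≤ E(r) ≤ E(1)` for `r ≥ 1`, while on `(0, 1]` the factor `r^(ν+1/2)` is at most `1` and `f`
is continuous. So `√r |J_ν(r)|` is bounded, and for `r = xy/(2t)` the kernel is
`√r |J_ν(r)| / √(2t) ≤ M t^(-1/2)`.
-/

open scoped Nat

noncomputable section

def powSeries (c : ℕ → ℝ) (x : ℝ) : ℝ := ∑' n, c n * x ^ n

def derivCoeff (c : ℕ → ℝ) (n : ℕ) : ℝ := (n + 1) * c (n + 1)

section FactorialBound

variable {c : ℕ → ℝ} {K : ℝ}

lemma abs_derivCoeff_le (hc : ∀ n, |c n| ≤ K / n !) (n : ℕ) : |derivCoeff c n| ≤ K / n ! := by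
  have hn : (0 : ℝ) < n + 1 := by positivity
  calc |derivCoeff c n| = (n + 1) * |c (n + 1)| := by
        rw [derivCoeff, abs_mul, abs_of_pos hn]
    _ ≤ (n + 1) * (K / (n + 1)!) := by gcongr; exact hc _
    _ = K / n ! := by rw [Nat.factorial_succ]; push_cast; field_simp

lemma summable_mul_pow_of_abs_le (hc : ∀ n, |c n| ≤ K / n !) (x : ℝ) :
    Summable fun n => c n * x ^ n := by
  refine .of_norm_bounded ((summable_pow_div_factorial |x|).mul_left K) fun n => ?_
  calc ‖c n * x ^ n‖ = |c n| * |x| ^ n := by rw [norm_mul, norm_pow, norm_eq_abs, norm_eq_abs]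
    _ ≤ K / n ! * |x| ^ n := by gcongr; exact hc n
    _ = K * (|x| ^ n / n !) := by ring

lemma hasDerivAt_powSeries (hc : ∀ n, |c n| ≤ K / n !) (x : ℝ) :
    HasDerivAt (powSeries c) (powSeries (derivCoeff c) x) x := by
  have hK : 0 ≤ K := by simpa using (abs_nonneg _).trans (hc 0)
  set R := |x| + 1
  have hR : 1 ≤ R := by simp [R]
  have hbound : ∀ n, ∀ y ∈ Metric.ball (0 : ℝ) R,
      ‖c n * (n * y ^ (n - 1))‖ ≤ K * ((2 * R) ^ n / n !) := by
    intro n y hy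
    rw [mem_ball_zero_iff, norm_eq_abs] at hy
    have hn : (n : ℝ) ≤ 2 ^ n := by exact_mod_cast Nat.lt_two_pow_self.le
    have hpow : |y| ^ (n - 1) ≤ R ^ n :=
      (pow_le_pow_left₀ (abs_nonneg y) hy.le _).trans (pow_le_pow_right₀ hR (n.sub_le 1))
    calc ‖c n * (n * y ^ (n - 1))‖ = |c n| * (n * |y| ^ (n - 1)) := by simp
      _ ≤ K / n ! * (2 ^ n * R ^ n) := by gcongr; exact hc n
      _ = K * ((2 * R) ^ n / n !) := by rw [mul_pow]; ring
  have hx : x ∈ Metric.ball (0 : ℝ) R := by simp [R]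
  have hderiv := hasDerivAt_tsum_of_isPreconnected
    ((summable_pow_div_factorial (2 * R)).mul_left K) Metric.isOpen_ball
    (convex_ball 0 R).isPreconnected (fun n y _ => (hasDerivAt_pow n y).const_mul (c n))
    hbound hx (summable_mul_pow_of_abs_le hc x) hx
  have hsum : Summable fun n => c n * (n * x ^ (n - 1)) :=
    .of_norm_bounded ((summable_pow_div_factorial (2 * R)).mul_left K) fun n => hbound n x hx
  refine hderiv.congr_deriv ?_
  rw [hsum.tsum_eq_zero_add, powSeries]
  simp [derivCoeff, mul_left_comm, mul_comm]

end FactorialBound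

lemma hasDerivAt_powSeries_sq {c : ℕ → ℝ} {K : ℝ} (hc : ∀ n, |c n| ≤ K / n !) (r : ℝ) :
    HasDerivAt (fun s => powSeries c (s ^ 2)) (2 * r * powSeries (derivCoeff c) (r ^ 2)) r := by
  refine ((hasDerivAt_powSeries hc (r ^ 2)).comp r (hasDerivAt_pow 2 r)).congr_deriv ?_
  push_cast
  ring

def besselCoeff (ν : ℝ) (n : ℕ) : ℝ := (-(1 / 4)) ^ n / (n ! * Gamma (ν + n + 1))

lemma besselJ_eq_rpow_mul_powSeries (ν r : ℝ) :
    besselJ ν r = (r / 2) ^ ν * powSeries (besselCoeff ν) (r ^ 2) := by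
  rw [besselJ, powSeries]
  congr 1
  refine tsum_congr fun n => ?_
  rw [besselCoeff, show -(r ^ 2 / 4) = -(1 / 4) * r ^ 2 by ring, mul_pow]
  ring

lemma besselCoeff_succ {ν : ℝ} (hν : -1 < ν) (n : ℕ) :
    4 * (n + 1) * (ν + n + 1) * besselCoeff ν (n + 1) = -besselCoeff ν n := by
  have hpos : 0 < ν + n + 1 := by linarith [n.cast_nonneg (α := ℝ)]
  have hGamma : Gamma (ν + (n + 1 : ℕ) + 1) = (ν + n + 1) * Gamma (ν + n + 1) := by
    rw [← Gamma_add_one hpos.ne']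
    push_cast
    ring_nf
  have hGamma_pos := Gamma_pos_of_pos hpos
  rw [besselCoeff, besselCoeff, hGamma, Nat.factorial_succ, pow_succ]
  push_cast
  field_simp

lemma abs_besselCoeff_le {ν : ℝ} (hν : -(1 / 2) ≤ ν) (n : ℕ) :
    |besselCoeff ν n| ≤ |besselCoeff ν 0| / n ! := by
  induction n with
  | zero => simp
  | succ n ih =>
    have hrec := congrArg abs (besselCoeff_succ (by linarith : -1 < ν) n)
    have hpos : 1 ≤ 4 * (ν + n + 1) := by linarith [n.cast_nonneg (α := ℝ)]
    have hn : (0 : ℝ) < n + 1 := by positivity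
    rw [abs_neg, abs_mul, abs_of_pos (by nlinarith)] at hrec
    calc |besselCoeff ν (n + 1)| ≤ |besselCoeff ν n| / (n + 1) := by
          rw [le_div_iff₀ (by positivity), ← hrec]
          nlinarith [mul_nonneg hn.le (abs_nonneg (besselCoeff ν (n + 1)))]
      _ ≤ |besselCoeff ν 0| / n ! / (n + 1) := by gcongr
      _ = |besselCoeff ν 0| / (n + 1)! := by
          rw [Nat.factorial_succ, div_div]; push_cast; ring

lemma powSeries_besselCoeff_ode {ν : ℝ} (hν : -(1 / 2) ≤ ν) (x : ℝ) :
    4 * x * powSeries (derivCoeff (derivCoeff (besselCoeff ν))) x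
      + (4 * ν + 4) * powSeries (derivCoeff (besselCoeff ν)) x
      + powSeries (besselCoeff ν) x = 0 := by
  have ha := abs_besselCoeff_le hν
  have ha' := abs_derivCoeff_le ha
  have ha'' := abs_derivCoeff_le ha'
  have h2 : HasSum (fun n : ℕ => 4 * n * derivCoeff (besselCoeff ν) n * x ^ n)
      (4 * x * powSeries (derivCoeff (derivCoeff (besselCoeff ν))) x) := by
    have hshift : (fun n : ℕ => 4 * ((n + 1 : ℕ) : ℝ) * derivCoeff (besselCoeff ν) (n + 1)
        * x ^ (n + 1)) = fun n => 4 * x * (derivCoeff (derivCoeff (besselCoeff ν)) n * x ^ n) := by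
      ext n
      simp only [derivCoeff]
      push_cast
      ring
    refine (hasSum_nat_add_iff' 1).mp ?_
    rw [Finset.sum_range_one, Nat.cast_zero, mul_zero, zero_mul, zero_mul, sub_zero, hshift]
    exact (summable_mul_pow_of_abs_le ha'' x).hasSum.mul_left (4 * x)
  have h1 := (summable_mul_pow_of_abs_le ha' x).hasSum.mul_left (4 * ν + 4)
  have h0 := (summable_mul_pow_of_abs_le ha x).hasSum
  refine ((h2.add h1).add h0).unique ?_
  convert hasSum_zero with n
  simp only [derivCoeff]
  linear_combination x ^ n * besselCoeff_succ (by linarith : -1 < ν) n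

def besselU (ν r : ℝ) : ℝ := r ^ (ν + 1 / 2) * powSeries (besselCoeff ν) (r ^ 2)

def besselUDeriv (ν r : ℝ) : ℝ :=
  r ^ (ν + 1 / 2) * ((ν + 1 / 2) / r * powSeries (besselCoeff ν) (r ^ 2)
    + 2 * r * powSeries (derivCoeff (besselCoeff ν)) (r ^ 2))

def besselEnergy (ν r : ℝ) : ℝ :=
  besselUDeriv ν r ^ 2 + (1 + (1 / 4 - ν ^ 2) / r ^ 2) * besselU ν r ^ 2

section Energy

variable {ν r : ℝ}

lemma hasDerivAt_besselU (hν : -(1 / 2) ≤ ν) (hr : 0 < r) :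
    HasDerivAt (besselU ν) (besselUDeriv ν r) r := by
  have hP := hasDerivAt_rpow_const (p := ν + 1 / 2) (Or.inl hr.ne')
  refine (hP.mul (hasDerivAt_powSeries_sq (abs_besselCoeff_le hν) r)).congr_deriv ?_
  rw [besselUDeriv, rpow_sub_one hr.ne']
  field_simp

lemma hasDerivAt_besselUDeriv (hν : -(1 / 2) ≤ ν) (hr : 0 < r) :
    HasDerivAt (besselUDeriv ν) (-(1 + (1 / 4 - ν ^ 2) / r ^ 2) * besselU ν r) r := by
  have ha := abs_besselCoeff_le hν
  have hP := hasDerivAt_rpow_const (p := ν + 1 / 2) (Or.inl hr.ne')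
  have hg := (((hasDerivAt_const r (ν + 1 / 2)).div (hasDerivAt_id r) hr.ne').mul
    (hasDerivAt_powSeries_sq ha r)).add
    (((hasDerivAt_id r).const_mul 2).mul (hasDerivAt_powSeries_sq (abs_derivCoeff_le ha) r))
  refine (hP.mul hg).congr_deriv ?_
  have hode := powSeries_besselCoeff_ode hν (r ^ 2)
  rw [besselU, rpow_sub_one hr.ne']
  simp only [Pi.add_apply, Pi.mul_apply, Pi.div_apply, id]
  field_simp
  linear_combination 16 * r ^ 2 * hode

lemma hasDerivAt_besselEnergy (hν : -(1 / 2) ≤ ν) (hr : 0 < r) :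
    HasDerivAt (besselEnergy ν) (-(2 * (1 / 4 - ν ^ 2)) * besselU ν r ^ 2 / r ^ 3) r := by
  have hw := ((hasDerivAt_const r (1 / 4 - ν ^ 2)).div (hasDerivAt_pow 2 r)
    (by positivity)).const_add 1
  refine (((hasDerivAt_besselUDeriv hν hr).pow 2).add
    (hw.mul ((hasDerivAt_besselU hν hr).pow 2))).congr_deriv ?_
  simp only [Pi.pow_apply, Pi.div_apply]
  field_simp
  ring

lemma besselEnergy_antitoneOn (hν : |ν| ≤ 1 / 2) : AntitoneOn (besselEnergy ν) (Ioi 0) := by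
  have hν' : -(1 / 2) ≤ ν := (abs_le.1 hν).1
  have hq : 0 ≤ 1 / 4 - ν ^ 2 := by nlinarith [abs_le.1 hν]
  refine antitoneOn_of_hasDerivWithinAt_nonpos (convex_Ioi 0)
    (f' := fun r => -(2 * (1 / 4 - ν ^ 2)) * besselU ν r ^ 2 / r ^ 3)
    (fun r hr => (hasDerivAt_besselEnergy hν' hr).continuousAt.continuousWithinAt)
    (fun r hr => ?_) (fun r hr => ?_) <;> rw [interior_Ioi] at hr
  · exact (hasDerivAt_besselEnergy hν' hr).hasDerivWithinAt
  · have hr' : (0 : ℝ) < r := hr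
    exact div_nonpos_of_nonpos_of_nonneg (by nlinarith [sq_nonneg (besselU ν r)]) (by positivity)

lemma exists_abs_besselU_le (hν : |ν| ≤ 1 / 2) : ∃ M, ∀ r, 0 < r → |besselU ν r| ≤ M := by
  have hν' : -(1 / 2) ≤ ν := (abs_le.1 hν).1
  have hcont : Continuous (powSeries (besselCoeff ν)) := continuous_iff_continuousAt.2
    fun x => (hasDerivAt_powSeries (abs_besselCoeff_le hν') x).continuousAt
  obtain ⟨B, hB⟩ := (isCompact_Icc (a := (0 : ℝ)) (b := 1)).exists_bound_of_continuousOn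
    hcont.continuousOn
  refine ⟨max B √(besselEnergy ν 1), fun r hr => ?_⟩
  rcases le_total r 1 with hr1 | hr1
  · have hf := hB (r ^ 2) ⟨sq_nonneg r, pow_le_one₀ hr.le hr1⟩
    have hP : r ^ (ν + 1 / 2) ≤ 1 := rpow_le_one hr.le hr1 (by linarith)
    calc |besselU ν r| = r ^ (ν + 1 / 2) * ‖powSeries (besselCoeff ν) (r ^ 2)‖ := by
          rw [besselU, abs_mul, abs_of_pos (rpow_pos_of_pos hr _), norm_eq_abs]
      _ ≤ 1 * B := by gcongr
      _ ≤ max B √(besselEnergy ν 1) := by rw [one_mul]; exact le_max_left _ _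
  · have hq : 0 ≤ (1 / 4 - ν ^ 2) / r ^ 2 := by
      have := abs_le.1 hν
      exact div_nonneg (by nlinarith) (sq_nonneg r)
    have hE : besselU ν r ^ 2 ≤ besselEnergy ν 1 := calc
      besselU ν r ^ 2 ≤ besselEnergy ν r := by
        rw [besselEnergy]; nlinarith [sq_nonneg (besselUDeriv ν r), sq_nonneg (besselU ν r)]
      _ ≤ besselEnergy ν 1 := besselEnergy_antitoneOn hν (mem_Ioi.2 one_pos) hr hr1
    exact (abs_le_sqrt hE).trans (le_max_right _ _)

end Energy

lemma sqrt_mul_abs_besselJ_eq {ν r : ℝ} (hr : 0 < r) :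
    √r * |besselJ ν r| = |besselU ν r| / 2 ^ ν := by
  rw [besselJ_eq_rpow_mul_powSeries, besselU, abs_mul, abs_mul,
    abs_of_pos (rpow_pos_of_pos (half_pos hr) ν), abs_of_pos (rpow_pos_of_pos hr _),
    div_rpow hr.le zero_le_two, sqrt_eq_rpow, rpow_add hr]
  ring

lemma exists_sqrt_mul_abs_besselJ_le {ν : ℝ} (hν : |ν| ≤ 1 / 2) :
    ∃ M, ∀ r, 0 < r → √r * |besselJ ν r| ≤ M := by
  obtain ⟨M, hM⟩ := exists_abs_besselU_le hν
  exact ⟨M / 2 ^ ν, fun r hr => by rw [sqrt_mul_abs_besselJ_eq hr]; gcongr; exact hM r hr⟩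

end

/-- For `l ∈ (−1/2, 0]` there is `C > 0` (depending only on `l`) such that for all
`x, y, t > 0` one has `(√(xy)/(2t)) |J_{−l−1/2}(xy/(2t))| ≤ C t^{−1/2}`. -/
theorem dispersive_estimate_pi_half_nonpos (l : ℝ) (hl : l ∈ Set.Ioc (-(1/2) : ℝ) 0) :
    ∃ C : ℝ, 0 < C ∧ ∀ x y t : ℝ, 0 < x → 0 < y → 0 < t →
      Real.sqrt (x * y) / (2 * t) * |besselJ (-l - 1/2) (x * y / (2 * t))| ≤
        C * t ^ (-(1/2) : ℝ) := by
  obtain ⟨M, hM⟩ := exists_sqrt_mul_abs_besselJ_le (ν := -l - 1 / 2)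
    (abs_le.2 ⟨by linarith [hl.2], by linarith [hl.1]⟩)
  refine ⟨max M 1, by positivity, fun x y t hx hy ht => ?_⟩
  set r := x * y / (2 * t)
  have hr : 0 < r := by positivity
  have hxy : x * y = 2 * t * r := by simp only [r]; field_simp
  calc √(x * y) / (2 * t) * |besselJ (-l - 1 / 2) r|
      = √r * |besselJ (-l - 1 / 2) r| / √(2 * t) := by
        rw [hxy, sqrt_mul (by positivity)]
        field_simp
        rw [sq_sqrt (by positivity)]
    _ ≤ max M 1 / √t := by
        gcongr
        · exact (hM r hr).trans (le_max_left _ _)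
        · linarith
    _ = max M 1 * t ^ (-(1 / 2) : ℝ) := by
        rw [rpow_neg ht.le, ← sqrt_eq_rpow, div_eq_mul_inv]
end

section
/- (van der Corput lemma, Wiener algebra variant.) Let σ be a finite complex measure on ℝ and define A(k) := ∫_ℝ e^{ikp} dσ(p), k ∈ ℝ. Let −∞ ≤ a < b ≤ ∞. Then for every t ≠ 0 the improper integral ∫_a^b e^{itk²} A(k) dk exists (as a limit of integrals over compact subintervals) and satisfies |∫_a^b e^{itk²} A(k) dk| ≤ C₂ · |t|^{−1/2} · ‖σ‖, where ‖σ‖ = |σ|(ℝ) is the total variation of σ and C₂ ≤ 2^{8/3} is a universal constant. -/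
/-!
Completing the square, `e^{itk²} e^{ikp} = e^{-ip²/(4t)} e^{it(k + p/(2t))²}`, so by Fubini the
integral over `[u, v]` equals `∫ e^{-ip²/(4t)} (Φ(v + p/(2t)) - Φ(u + p/(2t))) dσ(p)` with
`Φ(w) = ∫₀^w e^{itx²} dx`. Integrating by parts against `d/dx e^{itx²} = 2itx e^{itx²}` shows that
`Φ` converges at `±∞` and that `|Φ| ≤ 2 |t|^{-1/2}` (split at `|t|^{-1/2}`). Dominated convergence
then lets `u → a`, `v → b`, with the bound `4 |t|^{-1/2} ‖σ‖`.
-/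

open Complex MeasureTheory Filter Topology Set
open scoped Interval

lemma norm_cexp_I_mul_sq (t x : ℝ) : ‖cexp (I * t * (x : ℂ) ^ 2)‖ = 1 := by
  rw [norm_exp]; simp [← ofReal_pow]

lemma continuous_cexp_I_mul_sq (t : ℝ) : Continuous fun x : ℝ => cexp (I * t * (x : ℂ) ^ 2) := by
  fun_prop

lemma hasDerivAt_cexp_I_mul_sq (t x : ℝ) :
    HasDerivAt (fun y : ℝ => cexp (I * t * (y : ℂ) ^ 2))
      (cexp (I * t * (x : ℂ) ^ 2) * (2 * I * t * x)) x := by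
  have := ((hasDerivAt_pow 2 (x : ℂ)).const_mul (I * t)).comp_ofReal.cexp
  convert this using 1
  ring

lemma hasDerivAt_inv_mul_ofReal {κ : ℂ} {x : ℝ} (hx : κ * x ≠ 0) :
    HasDerivAt (fun y : ℝ => (κ * y)⁻¹) (-κ / (κ * x) ^ 2) x :=
  (((hasDerivAt_id (x : ℂ)).const_mul κ).comp_ofReal.inv (by simpa using hx)).congr_deriv (by simp)

lemma norm_integral_cexp_I_mul_sq_le {t u v : ℝ} (ht : t ≠ 0) (hu : 0 < u) (huv : u ≤ v) :
    ‖∫ x in u..v, cexp (I * t * (x : ℂ) ^ 2)‖ ≤ 1 / (|t| * u) := by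
  have hpos : ∀ x ∈ [[u, v]], 0 < x := fun x hx => hu.trans_le (by simpa [huv] using hx.1)
  have hκx : ∀ x ∈ [[u, v]], 2 * I * t * x ≠ 0 := fun x hx => by simp [ht, (hpos x hx).ne']
  have hcont : ContinuousOn (fun x : ℝ => -(2 * I * t) / (2 * I * t * x) ^ 2) [[u, v]] :=
    continuousOn_const.div (by fun_prop) fun x hx => pow_ne_zero 2 (hκx x hx)
  -- integrate by parts, writing the integrand as `(2itx)⁻¹ * d/dx e^{itx²}`
  have ibp := intervalIntegral.integral_mul_deriv_eq_deriv_mul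
    (fun x hx => hasDerivAt_inv_mul_ofReal (hκx x hx)) (fun x _ => hasDerivAt_cexp_I_mul_sq t x)
    hcont.intervalIntegrable ((by fun_prop : Continuous _).intervalIntegrable _ _)
  rw [intervalIntegral.integral_congr (g := fun x : ℝ => cexp (I * t * (x : ℂ) ^ 2))
    (fun x hx => by rw [mul_left_comm, inv_mul_cancel₀ (hκx x hx), mul_one])] at ibp
  set ρ : ℝ → ℝ := fun y => (2 * |t| * y)⁻¹
  have hρ : ∀ x ∈ [[u, v]], HasDerivAt (fun y => -ρ y) (2 * |t| / (2 * |t| * x) ^ 2) x := by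
    intro x hx
    have h0 : 2 * |t| * x ≠ 0 := by positivity [hpos x hx]
    exact (((hasDerivAt_id' x).const_mul (2 * |t|)).inv h0).neg.congr_deriv (by ring)
  have hg : IntervalIntegrable (fun x => 2 * |t| / (2 * |t| * x) ^ 2) volume u v :=
    (continuousOn_const.div (by fun_prop) fun x hx => by positivity [hpos x hx]).intervalIntegrable
  have hboundary : ∀ x ∈ [[u, v]], ‖(2 * I * t * x)⁻¹ * cexp (I * t * (x : ℂ) ^ 2)‖ = ρ x := by
    intro x hx
    simp [ρ, norm_cexp_I_mul_sq, abs_of_pos (hpos x hx)]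
  have hremainder : ‖∫ x in u..v, -(2 * I * t) / (2 * I * t * x) ^ 2 * cexp (I * t * (x : ℂ) ^ 2)‖
      ≤ ρ u - ρ v := by
    calc _ ≤ ∫ x in u..v, 2 * |t| / (2 * |t| * x) ^ 2 := by
          refine intervalIntegral.norm_integral_le_of_norm_le huv (ae_of_all _ fun x hx => ?_) hg
          have hx' : x ∈ [[u, v]] := Ioc_subset_Icc_self.trans Icc_subset_uIcc hx
          simp [norm_cexp_I_mul_sq, abs_of_pos (hpos x hx')]
      _ = ρ u - ρ v := by rw [intervalIntegral.integral_eq_sub_of_hasDerivAt hρ hg]; ring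
  rw [ibp]
  calc _ ≤ ρ v + ρ u + (ρ u - ρ v) := by
        refine (norm_sub_le _ _).trans (add_le_add ((norm_sub_le _ _).trans_eq ?_) hremainder)
        rw [hboundary v right_mem_uIcc, hboundary u left_mem_uIcc]
    _ = 1 / (|t| * u) := by simp only [ρ]; field_simp; ring

noncomputable def fresnelIntegral (t w : ℝ) : ℂ :=
  ∫ x in (0 : ℝ)..w, cexp (I * t * (x : ℂ) ^ 2)

section fresnelIntegral

variable (t : ℝ)

@[fun_prop]
lemma continuous_fresnelIntegral : Continuous (fresnelIntegral t) :=
  intervalIntegral.continuous_primitive ((continuous_cexp_I_mul_sq t).intervalIntegrable) 0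

lemma integral_cexp_I_mul_sq_eq_sub (u v : ℝ) :
    ∫ x in u..v, cexp (I * t * (x : ℂ) ^ 2) = fresnelIntegral t v - fresnelIntegral t u :=
  (intervalIntegral.integral_interval_sub_left ((continuous_cexp_I_mul_sq t).intervalIntegrable _ _)
    ((continuous_cexp_I_mul_sq t).intervalIntegrable _ _)).symm

lemma fresnelIntegral_neg (w : ℝ) : fresnelIntegral t (-w) = -fresnelIntegral t w := by
  have := intervalIntegral.integral_comp_neg (a := 0) (b := -w)
    (fun x : ℝ => cexp (I * t * (x : ℂ) ^ 2))
  simp only [ofReal_neg, neg_sq, neg_neg, neg_zero] at this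
  rw [fresnelIntegral, this, fresnelIntegral, intervalIntegral.integral_symm]

variable {t}

lemma norm_fresnelIntegral_le (ht : t ≠ 0) (w : ℝ) :
    ‖fresnelIntegral t w‖ ≤ 2 * |t| ^ (-(1 / 2) : ℝ) := by
  wlog hw : 0 ≤ w generalizing w
  · simpa [fresnelIntegral_neg] using this (-w) (by linarith)
  set r := |t| ^ (-(1 / 2) : ℝ)
  have hr : 0 < r := Real.rpow_pos_of_pos (abs_pos.2 ht) _
  have htr : 1 / (|t| * r) = r := by
    have : r * r = |t|⁻¹ := by
      rw [← Real.rpow_add (abs_pos.2 ht), ← Real.rpow_neg_one]; norm_num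
    field_simp
    rw [sq, this, mul_inv_cancel₀ (abs_pos.2 ht).ne']
  have hshort : ∀ s, 0 ≤ s → ‖fresnelIntegral t s‖ ≤ s := fun s hs => by
    simpa [fresnelIntegral, abs_of_nonneg hs] using
      intervalIntegral.norm_integral_le_of_norm_le_const (a := 0) (b := s) (C := 1)
        (fun x _ => (norm_cexp_I_mul_sq t x).le)
  rcases le_or_gt w r with hwr | hrw
  · linarith [hshort w hw]
  · calc ‖fresnelIntegral t w‖
        = ‖fresnelIntegral t r + ∫ x in r..w, cexp (I * t * (x : ℂ) ^ 2)‖ := by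
          rw [integral_cexp_I_mul_sq_eq_sub, add_sub_cancel]
      _ ≤ r + r := (norm_add_le _ _).trans (add_le_add (hshort r hr.le)
          ((norm_integral_cexp_I_mul_sq_le ht hr hrw.le).trans_eq htr))
      _ = 2 * r := by ring

lemma exists_tendsto_fresnelIntegral_atTop (ht : t ≠ 0) :
    ∃ l, Tendsto (fresnelIntegral t) atTop (𝓝 l) := by
  refine cauchySeq_tendsto_of_complete (Metric.cauchySeq_iff'.2 fun ε hε => ?_)
  have hN : 0 < 2 / (|t| * ε) := by positivity
  refine ⟨2 / (|t| * ε), fun w hw => ?_⟩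
  rw [dist_eq_norm, ← integral_cexp_I_mul_sq_eq_sub]
  calc _ ≤ 1 / (|t| * (2 / (|t| * ε))) := norm_integral_cexp_I_mul_sq_le ht hN hw
    _ < ε := by field_simp; linarith

end fresnelIntegral

lemma EReal.comap_coe_nhds_neBot (a : EReal) : (comap ((↑) : ℝ → EReal) (𝓝 a)).NeBot := by
  rw [comap_neBot_iff_frequently, ← mem_closure_iff_frequently, EReal.range_coe_eq_Ioo,
    closure_Ioo bot_ne_top]
  exact ⟨bot_le, le_top⟩

lemma Continuous.exists_tendsto_comap_coe_nhds {E : Type*} [TopologicalSpace E] {φ : ℝ → E}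
    (hφ : Continuous φ) {l₁ l₂ : E} (hbot : Tendsto φ atBot (𝓝 l₁))
    (htop : Tendsto φ atTop (𝓝 l₂)) (a : EReal) :
    ∃ l, Tendsto φ (comap (↑) (𝓝 a)) (𝓝 l) := by
  induction a using EReal.rec with
  | bot => exact ⟨l₁, hbot.comp (EReal.tendsto_coe_nhds_bot_iff.1 tendsto_comap)⟩
  | coe x => exact ⟨φ x, hφ.continuousAt.tendsto.comp (EReal.tendsto_coe.1 tendsto_comap)⟩
  | top => exact ⟨l₂, htop.comp (EReal.tendsto_coe_nhds_top_iff.1 tendsto_comap)⟩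

lemma exists_tendsto_fresnelIntegral_add_comap {t : ℝ} (ht : t ≠ 0) (c : ℝ) (a : EReal) :
    ∃ l, Tendsto (fun w => fresnelIntegral t (w + c)) (comap (↑) (𝓝 a)) (𝓝 l) := by
  obtain ⟨l, hl⟩ := exists_tendsto_fresnelIntegral_atTop ht
  have hbot : Tendsto (fresnelIntegral t) atBot (𝓝 (-l)) :=
    (hl.comp tendsto_neg_atBot_atTop).neg.congr fun w => by simp [fresnelIntegral_neg]
  have hcont : Continuous fun w => fresnelIntegral t (w + c) := by fun_prop
  exact hcont.exists_tendsto_comap_coe_nhds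
    (hbot.comp (tendsto_atBot_add_const_right _ c tendsto_id))
    (hl.comp (tendsto_atTop_add_const_right _ c tendsto_id)) a

noncomputable def fresnelKernel (t u v p : ℝ) : ℂ :=
  cexp (-I * p ^ 2 / (4 * t)) *
    (fresnelIntegral t (v + p / (2 * t)) - fresnelIntegral t (u + p / (2 * t)))

section fresnelKernel

variable {t : ℝ}

lemma integral_cexp_I_mul_sq_mul_cexp (ht : t ≠ 0) (u v p : ℝ) :
    ∫ k in u..v, cexp (I * t * (k : ℂ) ^ 2) * cexp (I * k * p) = fresnelKernel t u v p := by
  have ht' : (t : ℂ) ≠ 0 := ofReal_ne_zero.2 ht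
  have hsq : ∀ k : ℝ, cexp (I * t * (k : ℂ) ^ 2) * cexp (I * k * p) =
      cexp (-I * p ^ 2 / (4 * t)) * cexp (I * t * ((k + p / (2 * t) : ℝ) : ℂ) ^ 2) := by
    intro k
    rw [← exp_add, ← exp_add]
    congr 1
    push_cast
    field_simp
    ring
  simp_rw [hsq, intervalIntegral.integral_const_mul,
    intervalIntegral.integral_comp_add_right (fun x : ℝ => cexp (I * t * (x : ℂ) ^ 2)),
    integral_cexp_I_mul_sq_eq_sub, fresnelKernel]

lemma continuous_fresnelKernel (u v : ℝ) : Continuous (fresnelKernel t u v) := by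
  unfold fresnelKernel
  fun_prop

lemma norm_fresnelKernel_le (ht : t ≠ 0) (u v p : ℝ) :
    ‖fresnelKernel t u v p‖ ≤ 4 * |t| ^ (-(1 / 2) : ℝ) := by
  have hphase : ‖cexp (-I * p ^ 2 / (4 * t))‖ = 1 := by
    have : -I * p ^ 2 / (4 * t) = ((-(p ^ 2 / (4 * t)) : ℝ) : ℂ) * I := by push_cast; ring
    rw [this, norm_exp_ofReal_mul_I]
  rw [fresnelKernel, norm_mul, hphase, one_mul]
  linarith [norm_sub_le (fresnelIntegral t (v + p / (2 * t))) (fresnelIntegral t (u + p / (2 * t))),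
    norm_fresnelIntegral_le ht (v + p / (2 * t)), norm_fresnelIntegral_le ht (u + p / (2 * t))]

lemma exists_tendsto_fresnelKernel (ht : t ≠ 0) (a b : EReal) (p : ℝ) :
    ∃ c, Tendsto (fun uv : ℝ × ℝ => fresnelKernel t uv.1 uv.2 p)
      (comap (↑) (𝓝 a) ×ˢ comap (↑) (𝓝 b)) (𝓝 c) := by
  obtain ⟨la, hla⟩ := exists_tendsto_fresnelIntegral_add_comap ht (p / (2 * t)) a
  obtain ⟨lb, hlb⟩ := exists_tendsto_fresnelIntegral_add_comap ht (p / (2 * t)) b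
  exact ⟨_, ((hlb.comp tendsto_snd).sub (hla.comp tendsto_fst)).const_mul _⟩

end fresnelKernel

lemma intervalIntegral_integral_mul_swap {𝕜 : Type*} [RCLike 𝕜] {μ : Measure ℝ} [SFinite μ]
    {h : ℝ → 𝕜} (hh : Integrable h μ) {K : ℝ → ℝ → 𝕜} (hK : Continuous (Function.uncurry K)) {C : ℝ}
    (hKC : ∀ k p, ‖K k p‖ ≤ C) (u v : ℝ) :
    ∫ k in u..v, ∫ p, K k p * h p ∂μ = ∫ p, (∫ k in u..v, K k p) * h p ∂μ := by
  have : IsFiniteMeasure (volume.restrict (Ι u v)) :=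
    isFiniteMeasure_restrict.2 (by simp [Real.volume_uIoc])
  rw [intervalIntegral_integral_swap]
  · simp_rw [intervalIntegral.integral_mul_const]
  · refine Integrable.mono' ((hh.norm.const_mul C).comp_snd _)
      (hK.aestronglyMeasurable.mul hh.1.comp_snd) (ae_of_all _ fun z => ?_)
    simp only [Function.uncurry, norm_mul]
    exact mul_le_mul_of_nonneg_right (hKC _ _) (norm_nonneg _)

lemma intervalIntegral_cexp_I_mul_sq_mul_integral {μ : Measure ℝ} [SFinite μ]
    {h : ℝ → ℂ} (hh : Integrable h μ) {t : ℝ} (ht : t ≠ 0) (u v : ℝ) :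
    ∫ k in u..v, cexp (I * t * (k : ℂ) ^ 2) * ∫ p, cexp (I * k * p) * h p ∂μ =
      ∫ p, fresnelKernel t u v p * h p ∂μ := by
  simp_rw [← integral_const_mul, ← mul_assoc]
  rw [intervalIntegral_integral_mul_swap hh (by fun_prop) (C := 1)]
  · simp_rw [integral_cexp_I_mul_sq_mul_cexp ht]
  · intro k p
    rw [norm_mul, norm_cexp_I_mul_sq, norm_exp]
    simp

lemma exists_tendsto_integral_mul_of_tendsto {𝕜 α ι : Type*} [RCLike 𝕜] [MeasurableSpace α]
    {μ : Measure α} {l : Filter ι} [l.IsCountablyGenerated] [l.NeBot] {K : ι → α → 𝕜} {h : α → 𝕜}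
    {C : ℝ}
    (hh : Integrable h μ) (hKm : ∀ i, AEStronglyMeasurable (K i) μ) (hKC : ∀ i p, ‖K i p‖ ≤ C)
    (hlim : ∀ p, ∃ c, Tendsto (fun i => K i p) l (𝓝 c)) :
    ∃ L, Tendsto (fun i => ∫ p, K i p * h p ∂μ) l (𝓝 L) ∧ ‖L‖ ≤ C * ∫ p, ‖h p‖ ∂μ := by
  choose f hf using hlim
  have hfC : ∀ p, ‖f p‖ ≤ C := fun p => le_of_tendsto' (hf p).norm (hKC · p)
  refine ⟨∫ p, f p * h p ∂μ, ?_, ?_⟩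
  · refine tendsto_integral_filter_of_dominated_convergence (fun p => C * ‖h p‖)
      (Eventually.of_forall fun i => (hKm i).mul hh.1)
      (Eventually.of_forall fun i => ae_of_all _ fun p => ?_) (hh.norm.const_mul C)
      (ae_of_all _ fun p => (hf p).mul_const (h p))
    rw [norm_mul]
    exact mul_le_mul_of_nonneg_right (hKC i p) (norm_nonneg _)
  · rw [← integral_const_mul]
    refine norm_integral_le_of_norm_le (hh.norm.const_mul C) (ae_of_all _ fun p => ?_)
    rw [norm_mul]
    exact mul_le_mul_of_nonneg_right (hfC p) (norm_nonneg _)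

/-- Van der Corput lemma, Wiener algebra variant: there is a universal constant
`C₂ ≤ 2^{8/3}` such that for every finite complex measure `σ = h dμ` on `ℝ`
(represented by a finite measure `μ` and an integrable density `h`), every interval
`(a,b)` with `−∞ ≤ a < b ≤ ∞` and every `t ≠ 0`, the improper integral
`∫_a^b e^{itk²} A(k) dk`, where `A(k) = ∫ e^{ikp} dσ(p)`, exists as a limit of
integrals over compact subintervals exhausting `(a,b)` and its modulus is at most
`C₂ |t|^{−1/2} ‖σ‖`, where `‖σ‖ = ∫ ‖h‖ dμ` is the total variation of `σ`. -/
theorem van_der_corput_wiener :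
    ∃ C₂ : ℝ, 0 < C₂ ∧ C₂ ≤ 2 ^ ((8 : ℝ) / 3) ∧
      ∀ (μ : Measure ℝ), IsFiniteMeasure μ →
      ∀ h : ℝ → ℂ, Integrable h μ →
      ∀ a b : EReal, a < b →
      ∀ t : ℝ, t ≠ 0 →
      ∃ L : ℂ,
        (∀ u v : ℕ → ℝ,
          (∀ n, a < (u n : EReal)) → (∀ n, ((v n : EReal)) < b) →
          Filter.Tendsto (fun n => ((u n : EReal))) Filter.atTop (nhds a) →
          Filter.Tendsto (fun n => ((v n : EReal))) Filter.atTop (nhds b) →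
          Filter.Tendsto (fun n => ∫ k in (u n)..(v n),
              Complex.exp (Complex.I * (t : ℂ) * (k : ℂ) ^ 2) *
                ∫ p, Complex.exp (Complex.I * (k : ℂ) * (p : ℂ)) * h p ∂μ)
            Filter.atTop (nhds L)) ∧
        ‖L‖ ≤ C₂ * |t| ^ (-(1/2) : ℝ) * ∫ p, ‖h p‖ ∂μ := by
  refine ⟨4, by norm_num, ?_, fun μ _ h hh a b _ t ht => ?_⟩
  · calc (4 : ℝ) = 2 ^ (2 : ℝ) := by norm_num
      _ ≤ 2 ^ ((8 : ℝ) / 3) := Real.rpow_le_rpow_of_exponent_le (by norm_num) (by norm_num)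
  have := EReal.comap_coe_nhds_neBot a
  have := EReal.comap_coe_nhds_neBot b
  obtain ⟨L, hL, hLnorm⟩ := exists_tendsto_integral_mul_of_tendsto
    (l := comap ((↑) : ℝ → EReal) (𝓝 a) ×ˢ comap ((↑) : ℝ → EReal) (𝓝 b))
    (K := fun uv : ℝ × ℝ => fresnelKernel t uv.1 uv.2) hh
    (fun _ => (continuous_fresnelKernel _ _).aestronglyMeasurable)
    (fun _ _ => norm_fresnelKernel_le ht _ _ _) (exists_tendsto_fresnelKernel ht a b)
  refine ⟨L, fun u v _ _ hu hv => ?_, hLnorm⟩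
  have hu' : Tendsto u atTop (comap ((↑) : ℝ → EReal) (𝓝 a)) := tendsto_comap_iff.2 hu
  have hv' : Tendsto v atTop (comap ((↑) : ℝ → EReal) (𝓝 b)) := tendsto_comap_iff.2 hv
  exact (hL.comp (hu'.prodMk hv')).congr fun n =>
    (intervalIntegral_cexp_I_mul_sq_mul_integral hh ht _ _).symm
end

section
/- Let t ∈ ℝ, let ε < 0, and let σ be a finite complex measure on ℝ. Define f(k) := ∫_ℝ e^{ikp} dσ(p). Then the integral F := ∫_ℝ e^{−i(t+iε)k²} f(k) dk converges absolutely and F = √(π/(i(t+iε))) · ∫_ℝ e^{i p²/(4(t+iε))} dσ(p), where the square root is taken with the principal branch. -/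
open MeasureTheory Real Filter Set

/-!
For `ε < 0` the Gaussian factor has modulus `e^{εk²}`, so the integrand
`e^{−i(t+iε)k²} e^{ikp} h(p)` is absolutely integrable on `ℝ × ℝ`. Fubini then moves the
`k`-integral inside, where it is the Fourier transform of a Gaussian with complex parameter
`i(t+iε)`, of positive real part `−ε`.
-/

section

open Complex

variable {ν μ : Measure ℝ} {g h : ℝ → ℂ}

theorem integrable_prod_mul_cexp_mul (hg : Integrable g ν) (hh : Integrable h μ) :
    Integrable (fun q : ℝ × ℝ => g q.1 * (cexp (I * q.1 * q.2) * h q.2)) (ν.prod μ) := by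
  refine (hg.norm.mul_prod hh.norm).mono' ?_ (.of_forall fun q => ?_)
  · have hkernel : Continuous fun q : ℝ × ℝ => cexp (I * q.1 * q.2) := by fun_prop
    exact hg.aestronglyMeasurable.comp_fst.mul
      (hkernel.aestronglyMeasurable.mul hh.aestronglyMeasurable.comp_snd)
  · rw [norm_mul, norm_mul, mul_assoc I, ← ofReal_mul, norm_exp_I_mul_ofReal, one_mul]

theorem integral_mul_integral_cexp_mul [SFinite ν] [SFinite μ] (hg : Integrable g ν)
    (hh : Integrable h μ) :
    Integrable (fun k => g k * ∫ p, cexp (I * k * p) * h p ∂μ) ν ∧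
    ∫ k, g k * ∫ p, cexp (I * k * p) * h p ∂μ ∂ν =
      ∫ p, (∫ k, cexp (I * p * k) * g k ∂ν) * h p ∂μ := by
  have hprod := integrable_prod_mul_cexp_mul hg hh
  simp_rw [← integral_const_mul (g _)]
  refine ⟨hprod.integral_prod_left, (integral_integral_swap hprod).trans ?_⟩
  congr 1 with p
  rw [← integral_mul_const]
  congr 1 with k
  rw [mul_right_comm I (p : ℂ)]
  ring

end

/-- For `t ∈ ℝ`, `ε < 0` and a finite complex measure `σ = h dμ` on `ℝ` (represented
by a finite measure `μ` and an integrable density `h`), with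
`f(k) = ∫ e^{ikp} dσ(p)`, the integral `F = ∫_ℝ e^{−i(t+iε)k²} f(k) dk` converges
absolutely and `F = √(π/(i(t+iε))) ∫ e^{ip²/(4(t+iε))} dσ(p)`, the square root being
taken with the principal branch. -/
theorem gaussian_fourier_of_measure (t ε : ℝ) (hε : ε < 0)
    (μ : Measure ℝ) (hμ : IsFiniteMeasure μ) (h : ℝ → ℂ) (hh : Integrable h μ) :
    Integrable (fun k : ℝ =>
      Complex.exp (-Complex.I * ((t : ℂ) + (ε : ℂ) * Complex.I) * (k : ℂ) ^ 2) *
        ∫ p, Complex.exp (Complex.I * (k : ℂ) * (p : ℂ)) * h p ∂μ) volume ∧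
    (∫ k : ℝ,
      Complex.exp (-Complex.I * ((t : ℂ) + (ε : ℂ) * Complex.I) * (k : ℂ) ^ 2) *
        ∫ p, Complex.exp (Complex.I * (k : ℂ) * (p : ℂ)) * h p ∂μ) =
      ((Real.pi : ℂ) / (Complex.I * ((t : ℂ) + (ε : ℂ) * Complex.I))) ^ ((1 : ℂ) / 2) *
        ∫ p, Complex.exp (Complex.I * (p : ℂ) ^ 2 /
          (4 * ((t : ℂ) + (ε : ℂ) * Complex.I))) * h p ∂μ := by
  set z : ℂ := t + ε * Complex.I
  have hz : z ≠ 0 := fun h0 => hε.ne (by simpa [z] using congr_arg Complex.im h0)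
  have hb : 0 < (Complex.I * z).re := by simpa [z] using hε
  rw [neg_mul]
  obtain ⟨hint, heq⟩ := integral_mul_integral_cexp_mul (integrable_cexp_neg_mul_sq hb) hh
  refine ⟨hint, heq.trans ?_⟩
  rw [← integral_const_mul]
  congr 1 with p
  rw [fourierIntegral_gaussian hb, mul_assoc]
  congr 3
  rw [div_eq_div_iff (by simp [hz]) (by simp [hz])]
  linear_combination (-4 * (p : ℂ) ^ 2 * z) * Complex.I_sq
end
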